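/- In a simply-laced triangle-free Coxeter system, a link α of rank r ≥ 1 is braid equivalent to a Fibonacci link if and only if the subgraph of the Coxeter graph induced by the set of generators appearing in α is a star graph (a complete bipartite graph K_{1,k} for some k). -/

import Mathlib

/-!
The braid shadows of a Fibonacci link `φ` of rank `r` sit at `0, 2, …, 2r - 2`, so
`φ = c x₁ c x₂ ⋯ xᵣ c` with every `xᵢ` joined to `c`; triangle-freeness forbids edges between
the `xᵢ`, and braid moves do not change the support, so the support is a star centred at `c`.

Conversely, if the support is a star with centre `c`, every braid move turns `c x c` into
`x c x` or back. A word `w` of the class with the most letters `c` has no factor `x c x`, and,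
being reduced, no factor `a a`. Every word of the class then arises from `w` by turning some
factors `c x c` of `w`, far apart from each other, into `x c x`. Hence each braid shadow of the
class sits on a factor `c x c` of `w`, and `w` is a Fibonacci link.
-/

open List

namespace BraidFormal

variable {B : Type*}

/-- A single braid move: replace a factor `s t s` with `t s t` where `m(s,t) = 3`. -/
def IsBraidMove (M : CoxeterMatrix B) (w w' : List B) : Prop :=
  ∃ (u v : List B) (s t : B), M s t = 3 ∧
    w = u ++ [s, t, s] ++ v ∧ w' = u ++ [t, s, t] ++ v

/-- Braid equivalence: the reflexive-transitive closure of braid moves. -/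
def BraidEquiv (M : CoxeterMatrix B) : List B → List B → Prop :=
  Relation.ReflTransGen (IsBraidMove M)

/-- The braid class of a word. -/
def BraidClass (M : CoxeterMatrix B) (α : List B) : Set (List B) :=
  {β | BraidEquiv M α β}

/-- `w` has a braid shadow at (0-based) positions `i, i+1, i+2`:
the letters there are `s, t, s` with `m(s,t) = 3`.
(This corresponds to the 1-based interval `⟦i+1, i+3⟧` of the paper.) -/
def HasShadowAt (M : CoxeterMatrix B) (w : List B) (i : ℕ) : Prop :=
  ∃ s t : B, M s t = 3 ∧ w[i]? = some s ∧ w[i+1]? = some t ∧ w[i+2]? = some s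

/-- The braid class of `α` has a braid shadow at position `i`. -/
def ClassHasShadowAt (M : CoxeterMatrix B) (α : List B) (i : ℕ) : Prop :=
  ∃ β ∈ BraidClass M α, HasShadowAt M β i

/-- The rank of a reduced expression: the number of braid shadows of its braid class. -/
noncomputable def rank (M : CoxeterMatrix B) (α : List B) : ℕ :=
  Set.ncard {i | ClassHasShadowAt M α i}

/-- A Coxeter matrix is simply laced if all entries are at most 3. -/
def SimplyLaced (M : CoxeterMatrix B) : Prop := ∀ s t : B, M s t ≤ 3

/-- A Coxeter matrix is triangle free if its Coxeter graph has no three-cycles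
(all of whose edges are labelled 3). -/
def TriangleFree (M : CoxeterMatrix B) : Prop :=
  ∀ s t u : B, s ≠ t → t ≠ u → s ≠ u → M s t = 3 → M t u = 3 → M s u ≠ 3

/-- The set of generators appearing in (0-based) position `k` of some word in the
braid class of `α`. -/
def classSupp (M : CoxeterMatrix B) (α : List B) (k : ℕ) : Set B :=
  {s | ∃ β ∈ BraidClass M α, β[k]? = some s}

/-- The set of generators appearing in (0-based) positions `i` through `j` of `w`. -/
def suppInterval (w : List B) (i j : ℕ) : Set B :=
  {s | ∃ k, i ≤ k ∧ k ≤ j ∧ w[k]? = some s}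

variable {W : Type*} [Group W] {M : CoxeterMatrix B}

/-- `α` is a link of rank `r`: a reduced expression of length `2r+1` whose braid class
has braid shadows exactly at the (0-based) positions `0, 2, 4, …, 2r-2`
(the 1-based intervals `⟦1,3⟧, ⟦3,5⟧, …, ⟦2r-1,2r+1⟧`). -/
def IsLink (cs : CoxeterSystem M W) (α : List B) (r : ℕ) : Prop :=
  cs.IsReduced α ∧ α.length = 2 * r + 1 ∧
    ∀ i : ℕ, ClassHasShadowAt M α i ↔ ∃ j < r, i = 2 * j

/-- A Fibonacci link: a link all of whose braid-class braid shadows are braid shadows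
of the link itself. -/
def IsFibLink (cs : CoxeterSystem M W) (φ : List B) (r : ℕ) : Prop :=
  IsLink cs φ r ∧ ∀ i : ℕ, ClassHasShadowAt M φ i → HasShadowAt M φ i

/-- The subgraph of the Coxeter graph of `M` induced by `X` is a star graph `K_{1,k}`:
there is a center adjacent (label 3) to every other vertex of `X`, and no two
non-central vertices of `X` are adjacent. -/
def IsStarOn (M : CoxeterMatrix B) (X : Set B) : Prop :=
  ∃ c ∈ X, (∀ x ∈ X, x ≠ c → M x c = 3) ∧
    ∀ x ∈ X, ∀ y ∈ X, x ≠ c → y ≠ c → x ≠ y → M x y ≠ 3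

theorem _root_.CoxeterMatrix.ne_of_apply_eq_three {s t : B} (h : M s t = 3) : s ≠ t := by
  rintro rfl
  simp at h

theorem IsBraidMove.symm {w w' : List B} (h : IsBraidMove M w w') : IsBraidMove M w' w := by
  obtain ⟨u, v, s, t, h3, rfl, rfl⟩ := h
  exact ⟨u, v, t, s, M.symmetric t s ▸ h3, rfl, rfl⟩

theorem BraidEquiv.symm {w w' : List B} (h : BraidEquiv M w w') : BraidEquiv M w' w := by
  induction h with
  | refl => exact .refl
  | tail _ hm ih => exact ih.head hm.symm

theorem BraidEquiv.trans {w w' w'' : List B} (h : BraidEquiv M w w') (h' : BraidEquiv M w' w'') :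
    BraidEquiv M w w'' :=
  Relation.ReflTransGen.trans h h'

theorem IsBraidMove.mem_iff {w w' : List B} (h : IsBraidMove M w w') {a : B} : a ∈ w ↔ a ∈ w' := by
  obtain ⟨u, v, s, t, -, rfl, rfl⟩ := h
  simp only [List.mem_append, List.mem_cons, List.not_mem_nil]
  tauto

theorem BraidEquiv.mem_iff {w w' : List B} (h : BraidEquiv M w w') {a : B} : a ∈ w ↔ a ∈ w' := by
  induction h with
  | refl => rfl
  | tail _ hm ih => exact ih.trans hm.mem_iff

theorem BraidEquiv.length_eq {w w' : List B} (h : BraidEquiv M w w') : w.length = w'.length := by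
  induction h with
  | refl => rfl
  | tail _ hm ih =>
    obtain ⟨u, v, s, t, -, rfl, rfl⟩ := hm
    simpa using ih

theorem BraidEquiv.braidClass_eq {w w' : List B} (h : BraidEquiv M w w') :
    BraidClass M w = BraidClass M w' :=
  Set.ext fun _ => ⟨h.symm.trans, h.trans⟩

theorem IsBraidMove.wordProd_eq (cs : CoxeterSystem M W) {w w' : List B}
    (h : IsBraidMove M w w') : cs.wordProd w = cs.wordProd w' := by
  obtain ⟨u, v, s, t, h3, rfl, rfl⟩ := h
  have hbraid := cs.wordProd_braidWord_eq t s
  simp only [CoxeterSystem.braidWord, M.symmetric t s, h3, CoxeterSystem.alternatingWord,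
    List.concat_eq_append, List.nil_append, List.cons_append] at hbraid
  simp only [cs.wordProd_append, hbraid]

theorem BraidEquiv.wordProd_eq (cs : CoxeterSystem M W) {w w' : List B}
    (h : BraidEquiv M w w') : cs.wordProd w = cs.wordProd w' := by
  induction h with
  | refl => rfl
  | tail _ hm ih => exact ih.trans (hm.wordProd_eq cs)

theorem BraidEquiv.isReduced (cs : CoxeterSystem M W) {w w' : List B} (h : BraidEquiv M w w')
    (hw : cs.IsReduced w) : cs.IsReduced w' := by
  rw [CoxeterSystem.IsReduced, ← h.wordProd_eq cs, ← h.length_eq]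
  exact hw

theorem IsLink.of_braidEquiv (cs : CoxeterSystem M W) {α β : List B} {r : ℕ}
    (hα : IsLink cs α r) (h : BraidEquiv M α β) : IsLink cs β r := by
  obtain ⟨hred, hlen, hsh⟩ := hα
  refine ⟨h.isReduced cs hred, h.length_eq ▸ hlen, fun i => ?_⟩
  simpa only [ClassHasShadowAt, h.braidClass_eq] using hsh i

theorem IsBraidMove.exists_getElem? {β β' : List B} (h : IsBraidMove M β β') :
    ∃ q s t, M s t = 3 ∧
      β[q]? = some s ∧ β[q + 1]? = some t ∧ β[q + 2]? = some s ∧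
      β'[q]? = some t ∧ β'[q + 1]? = some s ∧ β'[q + 2]? = some t ∧
      ∀ k, k < q ∨ q + 2 < k → β'[k]? = β[k]? := by
  obtain ⟨u, v, s, t, h3, rfl, rfl⟩ := h
  refine ⟨u.length, s, t, h3, by simp, by simp, by simp, by simp, by simp, by simp, ?_⟩
  intro k hk
  simp only [List.getElem?_append, List.length_append, List.length_cons, List.length_nil]
  split_ifs <;> first | rfl | omega

theorem _root_.List.eq_take_append_triple_append_drop {w : List B} {i : ℕ} {a b d : B}
    (ha : w[i]? = some a) (hb : w[i + 1]? = some b) (hd : w[i + 2]? = some d) :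
    w = w.take i ++ [a, b, d] ++ w.drop (i + 3) := by
  have hlen : i + 2 < w.length := (List.getElem?_eq_some_iff.mp hd).1
  apply List.ext_getElem?
  intro k
  simp only [List.getElem?_append, List.length_append, List.length_take, List.length_cons,
    List.length_nil, List.getElem?_take, List.getElem?_drop,
    Nat.min_eq_left (by omega : i ≤ w.length)]
  split_ifs
  · rfl
  · rcases (by omega : k = i ∨ k = i + 1 ∨ k = i + 2) with rfl | rfl | rfl <;> simp_all
  · congr 1; omega

theorem _root_.CoxeterSystem.IsReduced.infix {cs : CoxeterSystem M W} {u w : List B}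
    (hw : cs.IsReduced w) (h : u <:+: w) : cs.IsReduced u := by
  obtain ⟨s, t, rfl⟩ := h
  have hu : ((s ++ u ++ t).take (s.length + u.length)).drop s.length = u := by
    simp [List.take_append]
  exact hu ▸ (hw.take _).drop _

theorem _root_.CoxeterSystem.IsReduced.getElem?_succ_ne {cs : CoxeterSystem M W} {w : List B}
    (hw : cs.IsReduced w) {i : ℕ} {a : B} (ha : w[i]? = some a) : w[i + 1]? ≠ some a := by
  intro hb
  have hinfix : [a, a] <:+: w := by
    refine List.infix_iff_getElem?.mpr ⟨i, ?_, fun j hj => ?_⟩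
    · have := (List.getElem?_eq_some_iff.mp hb).1
      simp only [List.length_cons, List.length_nil]
      omega
    · simp only [List.length_cons, List.length_nil] at hj
      interval_cases j <;> simpa [add_comm] using ‹_›
  have hreduced := (hw.infix hinfix).eq
  simp [CoxeterSystem.wordProd_cons] at hreduced

section Fibonacci

variable {φ : List B} {r : ℕ}

theorem getElem?_two_mul_of_hasShadowAt (hsh : ∀ j < r, HasShadowAt M φ (2 * j)) {j : ℕ}
    (hj : j ≤ r) : φ[2 * j]? = φ[0]? := by
  induction j with
  | zero => rfl
  | succ j ih =>
    obtain ⟨s, t, -, h0, -, h2⟩ := hsh j (by omega)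
    rw [← ih (by omega), h0, ← h2]
    rfl

theorem coxeterMatrix_eq_three_of_hasShadowAt (hlen : φ.length = 2 * r + 1)
    (hsh : ∀ j < r, HasShadowAt M φ (2 * j)) {c x : B} (hc : φ[0]? = some c) (hx : x ∈ φ)
    (hxc : x ≠ c) : M x c = 3 := by
  obtain ⟨k, hk, rfl⟩ := List.getElem_of_mem hx
  obtain ⟨j, rfl | rfl⟩ := Nat.even_or_odd' k
  · have h := getElem?_two_mul_of_hasShadowAt hsh (j := j) (by omega)
    rw [hc, List.getElem?_eq_getElem hk] at h
    exact absurd (Option.some.inj h) hxc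
  · obtain ⟨s, t, h3, h0, h1, -⟩ := hsh j (by omega)
    rw [getElem?_two_mul_of_hasShadowAt hsh (by omega), hc, Option.some.injEq] at h0
    rw [List.getElem?_eq_getElem hk, Option.some.injEq] at h1
    rw [M.symmetric, h1, h0, h3]

theorem isStarOn_of_hasShadowAt (htf : TriangleFree M) (hlen : φ.length = 2 * r + 1)
    (hsh : ∀ j < r, HasShadowAt M φ (2 * j)) : IsStarOn M {s | s ∈ φ} := by
  obtain ⟨c, hc⟩ : ∃ c, φ[0]? = some c := Option.isSome_iff_exists.mp (by simp [hlen])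
  have hadj : ∀ x ∈ φ, x ≠ c → M x c = 3 :=
    fun x hx hxc => coxeterMatrix_eq_three_of_hasShadowAt hlen hsh hc hx hxc
  refine ⟨c, List.mem_of_getElem? hc, hadj, fun x hx y hy hxc hyc hxy => ?_⟩
  exact htf x c y hxc (Ne.symm hyc) hxy (hadj x hx hxc) (M.symmetric y c ▸ hadj y hy hyc)

theorem IsFibLink.hasShadowAt {cs : CoxeterSystem M W} (hφ : IsFibLink cs φ r) {j : ℕ}
    (hj : j < r) : HasShadowAt M φ (2 * j) :=
  hφ.2 _ ((hφ.1.2.2 _).mpr ⟨j, hj, rfl⟩)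

end Fibonacci

section WindowFlip

variable {c : B} {w β β' : List B} {S : Finset ℕ}

structure IsCenterNormal (c : B) (w : List B) : Prop where
  getElem?_succ_ne : ∀ {i a}, w[i]? = some a → w[i + 1]? ≠ some a
  not_sandwich : ∀ {i x}, x ≠ c → w[i]? = some x → w[i + 1]? = some c → w[i + 2]? ≠ some x

def OffWindows (S : Finset ℕ) (k : ℕ) : Prop := ∀ p ∈ S, k < p ∨ p + 2 < k

theorem exists_mem_of_not_offWindows {k : ℕ} (h : ¬OffWindows S k) :
    ∃ p ∈ S, p ≤ k ∧ k ≤ p + 2 := by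
  simpa [OffWindows] using h

/-- `β` arises from `w` by replacing the factors `c x c` of `w` at the positions `p ∈ S`
(the windows `[p, p + 2]`) by `x c x`. -/
structure IsWindowFlip (c : B) (w β : List B) (S : Finset ℕ) : Prop where
  far : ∀ p ∈ S, ∀ q ∈ S, p ≠ q → p + 4 ≤ q ∨ q + 4 ≤ p
  window : ∀ p ∈ S, ∃ x, x ≠ c ∧ w[p]? = some c ∧ w[p + 1]? = some x ∧ w[p + 2]? = some c ∧
    β[p]? = some x ∧ β[p + 1]? = some c ∧ β[p + 2]? = some x
  getElem?_eq : ∀ k, OffWindows S k → β[k]? = w[k]?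

theorem IsWindowFlip.refl (c : B) (w : List B) : IsWindowFlip c w w ∅ :=
  ⟨by simp, by simp, fun _ _ => rfl⟩

theorem IsWindowFlip.offWindows_add_three (hf : IsWindowFlip c w β S) {p : ℕ} (hp : p ∈ S) :
    OffWindows S (p + 3) := fun q hq => by
  rcases eq_or_ne p q with rfl | hpq
  · omega
  · have := hf.far p hp q hq hpq
    omega

theorem IsWindowFlip.offWindows_of_getElem?_eq (hw : IsCenterNormal c w)
    (hf : IsWindowFlip c w β S) {i : ℕ} (h0 : β[i]? = some c) (h2 : β[i + 2]? = some c) :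
    ∀ k, i ≤ k → k ≤ i + 2 → OffWindows S k := by
  have hi : OffWindows S i := by
    by_contra hcov
    obtain ⟨p, hp, hpi, hip⟩ := exists_mem_of_not_offWindows hcov
    obtain ⟨x, hxc, -, -, w2, b0, -, b2⟩ := hf.window p hp
    rcases (by omega : i = p ∨ i = p + 1 ∨ i = p + 2) with rfl | rfl | rfl
    · exact hxc (Option.some.inj (b0.symm.trans h0))
    · exact hw.getElem?_succ_ne w2 (hf.getElem?_eq _ (hf.offWindows_add_three hp) ▸ h2)
    · exact hxc (Option.some.inj (b2.symm.trans h0))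
  have hi2 : OffWindows S (i + 2) := by
    by_contra hcov
    obtain ⟨p, hp, hpi, hip⟩ := exists_mem_of_not_offWindows hcov
    obtain ⟨x, hxc, w0, -, -, b0, -, b2⟩ := hf.window p hp
    rcases (by omega : i + 2 = p ∨ i + 1 = p ∨ i = p) with rfl | rfl | rfl
    · exact hxc (Option.some.inj (b0.symm.trans h2))
    · exact hw.getElem?_succ_ne (hf.getElem?_eq _ hi ▸ h0) w0
    · exact hxc (Option.some.inj (b2.symm.trans h2))
  intro k hik hki
  rcases (by omega : k = i ∨ k = i + 1 ∨ k = i + 2) with rfl | rfl | rfl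
  · exact hi
  · intro p hp
    have := hi p hp
    have := hi2 p hp
    omega
  · exact hi2

theorem IsWindowFlip.mem_of_sandwich (hw : IsCenterNormal c w) (hf : IsWindowFlip c w β S)
    {i : ℕ} {s : B} (hsc : s ≠ c) (h0 : β[i]? = some s) (h1 : β[i + 1]? = some c)
    (h2 : β[i + 2]? = some s) : i ∈ S := by
  by_contra hiS
  have hi1 : OffWindows S (i + 1) := by
    by_contra hcov
    obtain ⟨p, hp, hpi, hip⟩ := exists_mem_of_not_offWindows hcov
    obtain ⟨x, hxc, -, -, -, b0, -, b2⟩ := hf.window p hp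
    rcases (by omega : i + 1 = p ∨ i = p ∨ i + 1 = p + 2) with rfl | rfl | h
    · exact hxc (Option.some.inj (b0.symm.trans h1))
    · exact hiS hp
    · exact hxc (Option.some.inj (b2.symm.trans (h ▸ h1)))
  have w1 : w[i + 1]? = some c := hf.getElem?_eq _ hi1 ▸ h1
  have hi : OffWindows S i := by
    by_contra hcov
    obtain ⟨p, hp, hpi, hip⟩ := exists_mem_of_not_offWindows hcov
    obtain ⟨x, -, -, -, w2, -, b1, -⟩ := hf.window p hp
    rcases (by omega : i = p ∨ i = p + 1 ∨ i = p + 2) with rfl | rfl | rfl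
    · exact hiS hp
    · exact hsc (Option.some.inj (h0.symm.trans b1))
    · exact hw.getElem?_succ_ne w2 w1
  have hi2 : OffWindows S (i + 2) := by
    by_contra hcov
    obtain ⟨p, hp, hpi, hip⟩ := exists_mem_of_not_offWindows hcov
    obtain ⟨x, -, w0, -⟩ := hf.window p hp
    have := hi1 p hp
    rcases (by omega : i + 2 = p ∨ i = p) with rfl | rfl
    · exact hw.getElem?_succ_ne w1 w0
    · exact hiS hp
  exact hw.not_sandwich hsc (hf.getElem?_eq _ hi ▸ h0) w1 (hf.getElem?_eq _ hi2 ▸ h2)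

theorem IsWindowFlip.erase (hf : IsWindowFlip c w β S) {q : ℕ} (hq : q ∈ S)
    (hmid : ∀ k, q ≤ k → k ≤ q + 2 → β'[k]? = w[k]?)
    (hrest : ∀ k, k < q ∨ q + 2 < k → β'[k]? = β[k]?) : IsWindowFlip c w β' (S.erase q) where
  far p hp p' hp' := hf.far p (Finset.mem_of_mem_erase hp) p' (Finset.mem_of_mem_erase hp')
  window p hp := by
    obtain ⟨x, hxc, w0, w1, w2, b0, b1, b2⟩ := hf.window p (Finset.mem_of_mem_erase hp)
    have := hf.far p (Finset.mem_of_mem_erase hp) q hq (Finset.ne_of_mem_erase hp)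
    exact ⟨x, hxc, w0, w1, w2, hrest p (by omega) ▸ b0, hrest (p + 1) (by omega) ▸ b1,
      hrest (p + 2) (by omega) ▸ b2⟩
  getElem?_eq k hk := by
    by_cases hkq : q ≤ k ∧ k ≤ q + 2
    · exact hmid k hkq.1 hkq.2
    · rw [hrest k (by omega)]
      refine hf.getElem?_eq k fun p hp => ?_
      rcases eq_or_ne p q with rfl | hpq
      · omega
      · exact hk p (Finset.mem_erase_of_ne_of_mem hpq hp)

theorem IsWindowFlip.insert (hw : IsCenterNormal c w) (hf : IsWindowFlip c w β S) {q : ℕ}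
    {t : B} (h0 : β[q]? = some c) (h1 : β[q + 1]? = some t) (h2 : β[q + 2]? = some c)
    (b0 : β'[q]? = some t) (b1 : β'[q + 1]? = some c) (b2 : β'[q + 2]? = some t)
    (hrest : ∀ k, k < q ∨ q + 2 < k → β'[k]? = β[k]?) :
    IsWindowFlip c w β' (insert q S) := by
  have hoff := hf.offWindows_of_getElem?_eq hw h0 h2
  have w0 : w[q]? = some c := hf.getElem?_eq q (hoff q le_rfl (by omega)) ▸ h0
  have w1 : w[q + 1]? = some t := hf.getElem?_eq (q + 1) (hoff _ (by omega) (by omega)) ▸ h1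
  have w2 : w[q + 2]? = some c := hf.getElem?_eq (q + 2) (hoff _ (by omega) le_rfl) ▸ h2
  have hfar : ∀ p ∈ S, q + 4 ≤ p ∨ p + 4 ≤ q := by
    intro p hp
    obtain ⟨x, -, w0', -, w2', -⟩ := hf.window p hp
    have := hoff q le_rfl (by omega) p hp
    have := hoff (q + 2) (by omega) le_rfl p hp
    by_contra
    rcases (by omega : p = q + 3 ∨ q = p + 3) with rfl | rfl
    · exact hw.getElem?_succ_ne w2 w0'
    · exact hw.getElem?_succ_ne w2' w0
  refine ⟨?_, fun p hp => ?_, fun k hk => ?_⟩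
  · intro p hp p' hp' hpp'
    rcases Finset.mem_insert.mp hp with rfl | hpS <;>
      rcases Finset.mem_insert.mp hp' with rfl | hp'S
    · exact absurd rfl hpp'
    · exact hfar p' hp'S
    · exact (hfar p hpS).symm
    · exact hf.far p hpS p' hp'S hpp'
  · rcases Finset.mem_insert.mp hp with rfl | hp
    · exact ⟨t, fun h => hw.getElem?_succ_ne w0 (h ▸ w1), w0, w1, w2, b0, b1, b2⟩
    · obtain ⟨x, hxc, w0', w1', w2', b0', b1', b2'⟩ := hf.window p hp
      have := hfar p hp
      exact ⟨x, hxc, w0', w1', w2', hrest p (by omega) ▸ b0', hrest (p + 1) (by omega) ▸ b1',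
        hrest (p + 2) (by omega) ▸ b2'⟩
  · rw [hrest k (hk q (Finset.mem_insert_self q S))]
    exact hf.getElem?_eq k fun p hp => hk p (Finset.mem_insert_of_mem hp)

theorem IsWindowFlip.of_isBraidMove (hw : IsCenterNormal c w)
    (hedge : ∀ s ∈ β, ∀ t ∈ β, M s t = 3 → s = c ∨ t = c) (hf : IsWindowFlip c w β S)
    (hm : IsBraidMove M β β') : ∃ S', IsWindowFlip c w β' S' := by
  obtain ⟨q, s, t, h3, h0, h1, h2, b0, b1, b2, hrest⟩ := hm.exists_getElem?
  -- The move involves `c`: it opens a new window (`s = c`) or closes one of `S` (`t = c`).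
  rcases hedge s (List.mem_of_getElem? h0) t (List.mem_of_getElem? h1) h3 with rfl | rfl
  · exact ⟨_, hf.insert hw h0 h1 h2 b0 b1 b2 hrest⟩
  · have hq := hf.mem_of_sandwich hw (M.ne_of_apply_eq_three h3) h0 h1 h2
    obtain ⟨x, -, w0, w1, w2, b0', -, -⟩ := hf.window q hq
    have hsx : s = x := Option.some.inj (h0.symm.trans b0')
    refine ⟨_, hf.erase hq (fun k hqk hkq => ?_) hrest⟩
    rcases (by omega : k = q ∨ k = q + 1 ∨ k = q + 2) with rfl | rfl | rfl
    · rw [b0, w0]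
    · rw [b1, w1, hsx]
    · rw [b2, w2]

theorem exists_isWindowFlip (hw : IsCenterNormal c w)
    (hedge : ∀ s ∈ w, ∀ t ∈ w, M s t = 3 → s = c ∨ t = c) (h : BraidEquiv M w β) :
    ∃ S, IsWindowFlip c w β S := by
  induction h with
  | refl => exact ⟨∅, .refl c w⟩
  | tail hwβ hm ih =>
    obtain ⟨S, hf⟩ := ih
    exact hf.of_isBraidMove hw
      (fun s hs t ht => hedge s (BraidEquiv.mem_iff hwβ |>.mpr hs) t
        (BraidEquiv.mem_iff hwβ |>.mpr ht)) hm

theorem IsCenterNormal.getElem?_eq_of_hasShadowAt (hw : IsCenterNormal c w)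
    (hedge : ∀ s ∈ w, ∀ t ∈ w, M s t = 3 → s = c ∨ t = c) (h : BraidEquiv M w β) {i : ℕ}
    (hsh : HasShadowAt M β i) : w[i]? = some c ∧ w[i + 2]? = some c := by
  obtain ⟨S, hf⟩ := exists_isWindowFlip hw hedge h
  obtain ⟨s, t, h3, h0, h1, h2⟩ := hsh
  rcases hedge s (h.mem_iff.mpr (List.mem_of_getElem? h0)) t
    (h.mem_iff.mpr (List.mem_of_getElem? h1)) h3 with rfl | rfl
  · have hoff := hf.offWindows_of_getElem?_eq hw h0 h2
    exact ⟨hf.getElem?_eq i (hoff i le_rfl (by omega)) ▸ h0,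
      hf.getElem?_eq (i + 2) (hoff _ (by omega) le_rfl) ▸ h2⟩
  · have hi := hf.mem_of_sandwich hw (M.ne_of_apply_eq_three h3) h0 h1 h2
    obtain ⟨x, -, w0, -, w2, -⟩ := hf.window i hi
    exact ⟨w0, w2⟩

end WindowFlip

section Star

theorem exists_braidEquiv_forall_count_le [DecidableEq B] (α : List B) (c : B) :
    ∃ w, BraidEquiv M α w ∧ ∀ β, BraidEquiv M w β → β.count c ≤ w.count c := by
  have hbdd : BddAbove {n | ∃ β, BraidEquiv M α β ∧ β.count c = n} := by
    refine ⟨α.length, ?_⟩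
    rintro _ ⟨β, hβ, rfl⟩
    exact hβ.length_eq ▸ List.count_le_length
  obtain ⟨w, hαw, hw⟩ := Nat.sSup_mem (by exact ⟨_, α, .refl, rfl⟩) hbdd
  exact ⟨w, hαw, fun β hβ => hw ▸ le_csSup hbdd ⟨β, hαw.trans hβ, rfl⟩⟩

theorem isCenterNormal_of_forall_count_le [DecidableEq B] (cs : CoxeterSystem M W)
    {w : List B} {c : B} (hred : cs.IsReduced w) (hadj : ∀ x ∈ w, x ≠ c → M x c = 3)
    (hmax : ∀ β, BraidEquiv M w β → β.count c ≤ w.count c) : IsCenterNormal c w where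
  getElem?_succ_ne := hred.getElem?_succ_ne
  not_sandwich {i x} hxc h0 h1 h2 := by
    have hw := List.eq_take_append_triple_append_drop h0 h1 h2
    have hmove : IsBraidMove M w (w.take i ++ [c, x, c] ++ w.drop (i + 3)) :=
      ⟨_, _, x, c, hadj x (List.mem_of_getElem? h0) hxc, hw, rfl⟩
    have hle := hmax _ (.single hmove)
    conv_rhs at hle => rw [hw]
    simp [List.count_append, hxc] at hle

theorem IsCenterNormal.hasShadowAt {c : B} {w : List B} (hw : IsCenterNormal c w)
    (hadj : ∀ x ∈ w, x ≠ c → M x c = 3) {i : ℕ} (h0 : w[i]? = some c)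
    (h2 : w[i + 2]? = some c) : HasShadowAt M w i := by
  have hlen : i + 1 < w.length := by
    have := (List.getElem?_eq_some_iff.mp h2).1
    omega
  obtain ⟨t, h1⟩ : ∃ t, w[i + 1]? = some t := ⟨_, List.getElem?_eq_getElem hlen⟩
  have htc : t ≠ c := fun h => hw.getElem?_succ_ne h0 (h ▸ h1)
  exact ⟨c, t, (M.symmetric c t).trans (hadj t (List.mem_of_getElem? h1) htc), h0, h1, h2⟩

theorem exists_isFibLink_of_isStarOn (cs : CoxeterSystem M W) {α : List B} {r : ℕ}
    (hlink : IsLink cs α r) (hstar : IsStarOn M {s | s ∈ α}) :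
    ∃ φ ∈ BraidClass M α, IsFibLink cs φ r := by
  classical
  obtain ⟨c, -, hadj, hind⟩ := hstar
  obtain ⟨w, hαw, hmax⟩ := exists_braidEquiv_forall_count_le (M := M) α c
  have hmem : ∀ {x}, x ∈ w → x ∈ α := fun hx => hαw.mem_iff.mpr hx
  have hadj' : ∀ x ∈ w, x ≠ c → M x c = 3 := fun x hx => hadj x (hmem hx)
  have hedge : ∀ s ∈ w, ∀ t ∈ w, M s t = 3 → s = c ∨ t = c := by
    intro s hs t ht h3
    by_contra! h
    exact hind s (hmem hs) t (hmem ht) h.1 h.2 (M.ne_of_apply_eq_three h3) h3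
  have hwlink := hlink.of_braidEquiv cs hαw
  have hw := isCenterNormal_of_forall_count_le cs hwlink.1 hadj' hmax
  refine ⟨w, hαw, hwlink, fun i ⟨β, hwβ, hsh⟩ => ?_⟩
  obtain ⟨h0, h2⟩ := hw.getElem?_eq_of_hasShadowAt hedge hwβ hsh
  exact hw.hasShadowAt hadj' h0 h2

end Star

theorem statement_14_general {B W : Type*} [Group W] {M : CoxeterMatrix B}
    (cs : CoxeterSystem M W) (htf : TriangleFree M)
    (α : List B) (r : ℕ) (hlink : IsLink cs α r) :
    (∃ φ ∈ BraidClass M α, IsFibLink cs φ r) ↔ IsStarOn M {s | s ∈ α} := by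
  refine ⟨fun ⟨φ, hαφ, hφ⟩ => ?_, exists_isFibLink_of_isStarOn cs hlink⟩
  have hsupp : {s | s ∈ φ} = {s | s ∈ α} := Set.ext fun _ => (BraidEquiv.mem_iff hαφ).symm
  exact hsupp ▸ isStarOn_of_hasShadowAt htf hφ.1.2.1 fun _ hj => hφ.hasShadowAt hj

/-- a link is braid equivalent to a Fibonacci link iff the subgraph of
the Coxeter graph induced by its support is a star graph. -/
theorem statement_14 {B W : Type*} [Group W] {M : CoxeterMatrix B}
    (cs : CoxeterSystem M W) (hsl : SimplyLaced M) (htf : TriangleFree M)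
    (α : List B) (r : ℕ) (hlink : IsLink cs α r) (hr : 1 ≤ r) :
    (∃ φ ∈ BraidClass M α, IsFibLink cs φ r) ↔ IsStarOn M {s | s ∈ α} :=
  statement_14_general cs htf α r hlink

end BraidFormal
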